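/- arXiv:1410.5300 — 4 statements merged into one kernel-verified Lean document; each statement's English description precedes it below -/
import Mathlib

section
/- For all integers n ≥ 0 and k ≥ 1, every sequence of real numbers ᾱ = (α₀, α₁, …, α_{n−1}) and all nonzero real numbers ℓ₁, …, ℓ_k, the multiparameter poly-Cauchy numbers of the first kind satisfy C_{n,L}^{(k)}(ᾱ) = Σ_{m=0}^{n} s_ᾱ(n,m) (ℓ₁ℓ₂⋯ℓ_k)^{m+1} / (m+1)^k. -/
/-!
Expand the integrand in the basis of monomials. Each integration `∫₀^ℓ x^m dx = ℓ^{m+1}/(m+1)`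
multiplies the coefficient of `t^m` by `ℓ^{m+1}/(m+1)`, so after `k` integrations the monomial
`t^m` contributes `(ℓ₁⋯ℓ_k)^{m+1}/(m+1)^k`.
-/

open Finset

/-- Iterated integral ∫₀^{ℓ₁}⋯∫₀^{ℓ_k} f(x₁x₂⋯x_k) dx₁⋯dx_k over the list of bounds. -/
noncomputable def iterInt : List ℝ → (ℝ → ℝ) → ℝ
  | [], f => f 1
  | l :: ls, f => ∫ x in (0:ℝ)..l, iterInt ls (fun y => f (x * y))

lemma integral_sum_mul_pow (l : ℝ) (N : ℕ) (c : ℕ → ℝ) :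
    ∫ x in (0 : ℝ)..l, ∑ m ∈ range N, c m * x ^ m =
      ∑ m ∈ range N, c m * l ^ (m + 1) / ((m : ℝ) + 1) := by
  have hint (m : ℕ) : IntervalIntegrable (fun x => c m * x ^ m) MeasureTheory.volume 0 l :=
    (continuous_const.mul (continuous_pow m)).intervalIntegrable _ _
  rw [intervalIntegral.integral_finsetSum fun m _ => hint m]
  refine sum_congr rfl fun m _ => ?_
  rw [intervalIntegral.integral_const_mul, integral_pow]
  ring

lemma iterInt_sum_mul_pow (ls : List ℝ) (N : ℕ) (s : ℕ → ℝ) :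
    iterInt ls (fun t => ∑ m ∈ range N, s m * t ^ m) =
      ∑ m ∈ range N, s m * ls.prod ^ (m + 1) / ((m : ℝ) + 1) ^ ls.length := by
  induction ls generalizing s with
  | nil => simp [iterInt]
  | cons l ls ih =>
    have inner (x : ℝ) : iterInt ls (fun y => ∑ m ∈ range N, s m * (x * y) ^ m) =
        ∑ m ∈ range N, (s m * ls.prod ^ (m + 1) / ((m : ℝ) + 1) ^ ls.length) * x ^ m := by
      simp_rw [mul_pow, ← mul_assoc]
      rw [ih]
      exact sum_congr rfl fun m _ => by ring
    simp only [iterInt, inner, integral_sum_mul_pow, List.prod_cons, List.length_cons]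
    exact sum_congr rfl fun m _ => by rw [pow_succ _ ls.length]; field_simp; ring

theorem stmt0_general (n k : ℕ) (α : ℕ → ℝ) (L : Fin k → ℝ) (s : ℕ → ℝ)
    (hs : ∀ x : ℝ, ∏ i ∈ range n, (x - α i) = ∑ m ∈ range (n + 1), s m * x ^ m) :
    iterInt (List.ofFn L) (fun t => ∏ i ∈ range n, (t - α i)) =
      ∑ m ∈ range (n + 1), s m * (∏ i, L i) ^ (m + 1) / ((m : ℝ) + 1) ^ k := by
  rw [funext hs, iterInt_sum_mul_pow, List.prod_ofFn, List.length_ofFn]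

theorem stmt0 (n k : ℕ) (hk : 1 ≤ k) (α : ℕ → ℝ) (L : Fin k → ℝ)
    (hL : ∀ i, L i ≠ 0) (s : ℕ → ℝ)
    (hs : ∀ x : ℝ, ∏ i ∈ range n, (x - α i) = ∑ m ∈ range (n + 1), s m * x ^ m) :
    iterInt (List.ofFn L) (fun t => ∏ i ∈ range n, (t - α i)) =
      ∑ m ∈ range (n + 1), s m * (∏ i, L i) ^ (m + 1) / ((m : ℝ) + 1) ^ k :=
  stmt0_general n k α L s hs
end

section
/- For all integers n ≥ 0 and k ≥ 1, every sequence of real numbers ᾱ = (α₀, α₁, …, α_{n−1}) and all nonzero real numbers ℓ₁, …, ℓ_k, the multiparameter poly-Cauchy numbers of the first kind satisfy C_{n,L}^{(k)}(ᾱ) = Σ_{m=0}^{n} S(n,m;ᾱ) C_{m,L}^{(k)}, where C_{m,L}^{(k)} = ∫₀^{ℓ₁}⋯∫₀^{ℓ_k} (x₁x₂⋯x_k)_m dx₁⋯dx_k. -/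
/-!
An integral of a non-integrable function is junk, so `iterInt` is not linear in general;
on polynomials it is. Expanding in monomials and integrating one variable at a time,
`iterInt l (fun t => ∑ c j * t ^ j) = ∑ c j * iterInt l (· ^ j)`, so `iterInt l` restricts
to a linear functional on `ℝ[X]`. The falling factorial is the polynomial
`descPochhammer ℝ m`, so after rewriting the integrand with the expansion `hS`, linearity
gives the theorem.
-/

open Finset

/-- Falling factorial (x)_m = x(x-1)⋯(x-m+1) of a real number. -/
noncomputable def ffall (x : ℝ) (m : ℕ) : ℝ := ∏ i ∈ Finset.range m, (x - (i : ℝ))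

open Polynomial

lemma iterInt_sum_mul_pow_s4 (l : List ℝ) (s : Finset ℕ) (c : ℕ → ℝ) :
    iterInt l (fun t => ∑ j ∈ s, c j * t ^ j) = ∑ j ∈ s, c j * iterInt l (· ^ j) := by
  induction l generalizing s c with
  | nil => simp [iterInt]
  | cons a ls ih =>
    have scaled (s : Finset ℕ) (c : ℕ → ℝ) (x : ℝ) :
        iterInt ls (fun y => ∑ j ∈ s, c j * (x * y) ^ j)
          = ∑ j ∈ s, c j * x ^ j * iterInt ls (· ^ j) := by
      simp_rw [mul_pow, ← mul_assoc, ih]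
    have scaled_pow (j : ℕ) (x : ℝ) :
        iterInt ls (fun y => (x * y) ^ j) = x ^ j * iterInt ls (· ^ j) := by
      simpa using scaled {j} 1 x
    simp only [iterInt, scaled, scaled_pow]
    rw [intervalIntegral.integral_finsetSum fun j _ =>
      (by fun_prop : Continuous fun x : ℝ => c j * x ^ j * iterInt ls (· ^ j)).intervalIntegrable _ _]
    simp_rw [mul_assoc, intervalIntegral.integral_const_mul]

noncomputable def iterIntPoly (l : List ℝ) : ℝ[X] →ₗ[ℝ] ℝ :=
  lsum fun j => iterInt l (· ^ j) • LinearMap.id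

lemma iterInt_eval_eq_iterIntPoly (l : List ℝ) (p : ℝ[X]) :
    iterInt l (fun t => p.eval t) = iterIntPoly l p := by
  simp only [eval_eq_sum, Polynomial.sum_def, iterInt_sum_mul_pow_s4]
  simp [iterIntPoly, Polynomial.sum_def, mul_comm]

lemma iterInt_sum_mul_eval {ι : Type*} (l : List ℝ) (s : Finset ι) (c : ι → ℝ) (p : ι → ℝ[X]) :
    iterInt l (fun t => ∑ i ∈ s, c i * (p i).eval t)
      = ∑ i ∈ s, c i * iterInt l (fun t => (p i).eval t) := by
  have hsum : (fun t => ∑ i ∈ s, c i * (p i).eval t) = fun t => (∑ i ∈ s, c i • p i).eval t := by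
    simp [eval_finsetSum]
  simp [hsum, iterInt_eval_eq_iterIntPoly, map_sum]

lemma ffall_eq_eval_descPochhammer (x : ℝ) (m : ℕ) : ffall x m = (descPochhammer ℝ m).eval x :=
  (descPochhammer_eval_eq_prod_range m x).symm

theorem stmt4_general (n k : ℕ) (α : ℕ → ℝ) (L : Fin k → ℝ) (S : ℕ → ℝ)
    (hS : ∀ x : ℝ, ∏ i ∈ range n, (x - α i) = ∑ m ∈ range (n + 1), S m * ffall x m) :
    iterInt (List.ofFn L) (fun t => ∏ i ∈ range n, (t - α i)) =
      ∑ m ∈ range (n + 1), S m * iterInt (List.ofFn L) (fun t => ffall t m) := by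
  simp_rw [hS, ffall_eq_eval_descPochhammer]
  exact iterInt_sum_mul_eval _ _ _ _

theorem stmt4 (n k : ℕ) (hk : 1 ≤ k) (α : ℕ → ℝ) (L : Fin k → ℝ)
    (hL : ∀ i, L i ≠ 0) (S : ℕ → ℝ)
    (hS : ∀ x : ℝ, ∏ i ∈ range n, (x - α i) = ∑ m ∈ range (n + 1), S m * ffall x m) :
    iterInt (List.ofFn L) (fun t => ∏ i ∈ range n, (t - α i)) =
      ∑ m ∈ range (n + 1), S m * iterInt (List.ofFn L) (fun t => ffall t m) :=
  stmt4_general n k α L S hS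
end

section
/- For every integer n ≥ 0, every sequence of real numbers ᾱ = (α₀, α₁, …, α_{n−1}) and every nonzero real number ℓ, the multiparameter Cauchy numbers of the second kind satisfy Ĉ_{n,ᾱ,ℓ} = Σ_{r=0}^{n} Σ_{m=r}^{n} S(n,m;ᾱ) L(m,r) C_{r,ℓ}, where C_{r,ℓ} = ∫₀^{ℓ} (x)_r dx. -/
open Finset

/-!
Substituting `-x` into the expansion `∏ (x - αᵢ) = ∑ₘ S(n,m;ᾱ) (x)ₘ` and then expanding each
`(-x)ₘ` by the Lah numbers writes the integrand of `Ĉ_{n,ᾱ,ℓ}` as a linear combination of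
falling factorials `(x)ᵣ`; exchanging the two finite sums and integrating term by term gives the
formula.
-/

theorem continuous_ffall (m : ℕ) : Continuous fun x : ℝ => ffall x m :=
  continuous_finsetProd _ fun _ _ => continuous_id.sub continuous_const

theorem integral_sum_mul_ffall (s : Finset ℕ) (c : ℕ → ℝ) (a b : ℝ) :
    ∫ x in a..b, ∑ r ∈ s, c r * ffall x r = ∑ r ∈ s, c r * ∫ x in a..b, ffall x r := by
  rw [intervalIntegral.integral_finsetSum fun r _ =>
    ((continuous_ffall r).const_mul (c r)).intervalIntegrable a b]
  exact sum_congr rfl fun r _ => intervalIntegral.integral_const_mul _ _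

theorem sum_range_succ_sum_range_succ_comm {M : Type*} [AddCommMonoid M] (n : ℕ)
    (f : ℕ → ℕ → M) :
    ∑ m ∈ range (n + 1), ∑ r ∈ range (m + 1), f m r =
      ∑ r ∈ range (n + 1), ∑ m ∈ Icc r n, f m r :=
  sum_comm' fun m r => by simp only [mem_range, mem_Icc]; omega

theorem stmt9_general (n : ℕ) (α : ℕ → ℝ) (ℓ : ℝ)
    (S : ℕ → ℝ) (Lah : ℕ → ℕ → ℝ)
    (hS : ∀ x : ℝ, ∏ i ∈ range n, (x - α i) = ∑ m ∈ range (n + 1), S m * ffall x m)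
    (hLah : ∀ m ≤ n, ∀ x : ℝ, ffall (-x) m = ∑ r ∈ range (m + 1), Lah m r * ffall x r) :
    (∫ x in (0:ℝ)..ℓ, ∏ i ∈ range n, (-x - α i)) =
      ∑ r ∈ range (n + 1), ∑ m ∈ Icc r n,
        S m * Lah m r * (∫ x in (0:ℝ)..ℓ, ffall x r) := by
  have expansion : ∀ x : ℝ, ∏ i ∈ range n, (-x - α i) =
      ∑ r ∈ range (n + 1), (∑ m ∈ Icc r n, S m * Lah m r) * ffall x r := fun x =>
    calc ∏ i ∈ range n, (-x - α i) = ∑ m ∈ range (n + 1), S m * ffall (-x) m := hS (-x)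
      _ = ∑ m ∈ range (n + 1), ∑ r ∈ range (m + 1), S m * Lah m r * ffall x r :=
        sum_congr rfl fun m hm => by
          rw [hLah m (Nat.lt_succ_iff.mp (mem_range.mp hm)) x, mul_sum]
          simp only [mul_assoc]
      _ = ∑ r ∈ range (n + 1), (∑ m ∈ Icc r n, S m * Lah m r) * ffall x r := by
        simp only [sum_range_succ_sum_range_succ_comm, sum_mul]
  simp only [expansion, integral_sum_mul_ffall]
  simp only [sum_mul]

theorem stmt9 (n : ℕ) (α : ℕ → ℝ) (ℓ : ℝ) (hℓ : ℓ ≠ 0)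
    (S : ℕ → ℝ) (Lah : ℕ → ℕ → ℝ)
    (hS : ∀ x : ℝ, ∏ i ∈ range n, (x - α i) = ∑ m ∈ range (n + 1), S m * ffall x m)
    (hLah : ∀ m ≤ n, ∀ x : ℝ, ffall (-x) m = ∑ r ∈ range (m + 1), Lah m r * ffall x r) :
    (∫ x in (0:ℝ)..ℓ, ∏ i ∈ range n, (-x - α i)) =
      ∑ r ∈ range (n + 1), ∑ m ∈ Icc r n,
        S m * Lah m r * (∫ x in (0:ℝ)..ℓ, ffall x r) :=
  stmt9_general n α ℓ S Lah hS hLah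
end

section
/- For all integers n ≥ 0 and k ≥ 1, every sequence of real numbers ᾱ = (α₀, α₁, …, α_{n−1}) and all nonzero real numbers ℓ₁, …, ℓ_k, the multiparameter poly-Bernoulli numbers are expressed through the multiparameter poly-Cauchy numbers of the first kind by B_{n,ᾱ,L}^{(k)} = Σ_{j=0}^{n} Σ_{m=j}^{n} (−1)^{n−m} m! S_ᾱ(n,m) S_ᾱ(m,j) C_{j,L}^{(k)}(ᾱ). -/
open Finset

theorem continuous_iterInt {X : Type*} [TopologicalSpace X] (l : List ℝ) {f : X → ℝ → ℝ}
    (hf : Continuous (Function.uncurry f)) : Continuous fun x => iterInt l (f x) := by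
  induction l generalizing X with
  | nil => exact hf.comp (continuous_id.prodMk continuous_const)
  | cons a ls ih =>
    have hg : Continuous fun p : X × ℝ => iterInt ls (fun y => f p.1 (p.2 * y)) :=
      ih (f := fun (p : X × ℝ) y => f p.1 (p.2 * y)) (by fun_prop)
    exact intervalIntegral.continuous_parametric_intervalIntegral_of_continuous'
      (f := fun x t => iterInt ls (fun y => f x (t * y))) hg 0 a

theorem iterInt_const_mul (l : List ℝ) (c : ℝ) (f : ℝ → ℝ) :
    iterInt l (fun t => c * f t) = c * iterInt l f := by
  induction l generalizing f with
  | nil => rfl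
  | cons a ls ih =>
    simp only [iterInt, ih, intervalIntegral.integral_const_mul]

theorem iterInt_finset_sum {ι : Type*} (l : List ℝ) (s : Finset ι) {f : ι → ℝ → ℝ}
    (hf : ∀ i ∈ s, Continuous (f i)) :
    iterInt l (fun t => ∑ i ∈ s, f i t) = ∑ i ∈ s, iterInt l (f i) := by
  induction l generalizing f with
  | nil => rfl
  | cons a ls ih =>
    have hscaled : ∀ x : ℝ, ∀ i ∈ s, Continuous fun y => f i (x * y) :=
      fun x i hi => (hf i hi).comp (continuous_const_mul x)
    simp only [iterInt, ih (hscaled _)]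
    refine intervalIntegral.integral_finsetSum fun i hi => Continuous.intervalIntegrable ?_ _ _
    exact continuous_iterInt ls (f := fun x y => f i (x * y)) (by fun_prop)

theorem iterInt_pow (l : List ℝ) (m : ℕ) :
    iterInt l (fun t => t ^ m) = l.prod ^ (m + 1) / ((m : ℝ) + 1) ^ l.length := by
  induction l with
  | nil => simp [iterInt]
  | cons a ls ih =>
    have hscaled : ∀ x : ℝ, iterInt ls (fun y => (x * y) ^ m) = x ^ m * iterInt ls (· ^ m) := by
      simp only [mul_pow, iterInt_const_mul, implies_true]
    simp only [iterInt, hscaled, ih, intervalIntegral.integral_mul_const, integral_pow]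
    rw [List.prod_cons, List.length_cons, mul_pow, pow_succ (_ + 1)]
    field_simp
    ring

theorem stmt13_general (n k : ℕ) (α : ℕ → ℝ) (L : Fin k → ℝ) (S : ℕ → ℕ → ℝ)
    (hS : ∀ p ≤ n, ∀ x : ℝ,
      x ^ p = ∑ m ∈ range (p + 1), S p m * ∏ i ∈ range m, (x - α i)) :
    ∑ m ∈ range (n + 1),
        (-1 : ℝ) ^ (n - m) * (m.factorial : ℝ) * S n m *
          (∏ i, L i) ^ (m + 1) / ((m : ℝ) + 1) ^ k =
      ∑ j ∈ range (n + 1), ∑ m ∈ Icc j n,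
        (-1 : ℝ) ^ (n - m) * (m.factorial : ℝ) * S n m * S m j *
          iterInt (List.ofFn L) (fun t => ∏ i ∈ range j, (t - α i)) := by
  have hbox : ∀ m ≤ n, ∑ j ∈ range (m + 1),
      S m j * iterInt (List.ofFn L) (fun t => ∏ i ∈ range j, (t - α i))
        = (∏ i, L i) ^ (m + 1) / ((m : ℝ) + 1) ^ k := by
    intro m hm
    simp_rw [← iterInt_const_mul]
    rw [← iterInt_finset_sum _ _ fun j _ => by fun_prop, ← funext (hS m hm), iterInt_pow,
      List.prod_ofFn, List.length_ofFn]
  rw [sum_comm' (t' := range (n + 1)) (s' := fun m => range (m + 1))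
    (fun j m => by simp only [mem_range, mem_Icc]; omega)]
  refine sum_congr rfl fun m hm => ?_
  simp_rw [mul_assoc _ (S m _), ← mul_sum, hbox m (by simpa [Nat.lt_succ_iff] using hm)]
  ring

theorem stmt13 (n k : ℕ) (hk : 1 ≤ k) (α : ℕ → ℝ) (L : Fin k → ℝ)
    (hL : ∀ i, L i ≠ 0) (S : ℕ → ℕ → ℝ)
    (hS : ∀ p ≤ n, ∀ x : ℝ,
      x ^ p = ∑ m ∈ range (p + 1), S p m * ∏ i ∈ range m, (x - α i)) :
    ∑ m ∈ range (n + 1),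
        (-1 : ℝ) ^ (n - m) * (m.factorial : ℝ) * S n m *
          (∏ i, L i) ^ (m + 1) / ((m : ℝ) + 1) ^ k =
      ∑ j ∈ range (n + 1), ∑ m ∈ Icc j n,
        (-1 : ℝ) ^ (n - m) * (m.factorial : ℝ) * S n m * S m j *
          iterInt (List.ofFn L) (fun t => ∏ i ∈ range j, (t - α i)) :=
  stmt13_general n k α L S hS
end
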